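/- arXiv:2010.11111 — 8 statements merged into one kernel-verified Lean document; each statement's English description precedes it below -/
import Mathlib

section
/- Let M : ℕ → ℝ be a positive log-convex sequence (condition (M.1)) with M 0 = 1 and lim_{p→∞} (M p)^(1/p) = ∞. Define the associated function ω_M(ρ) = sup_{p ∈ ℕ} log(ρ^p / M p) for ρ ≥ 0. Then log ρ = o(ω_M(ρ)) as ρ → ∞. -/
/-!
Since `(M p)^(1/p) → ∞`, for fixed `ρ` the terms `log (ρ^p / M p)` are eventually nonpositive, so
the supremum defining `ω_M(ρ)` is finite. Its `p`-th term then gives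
`ω_M(ρ) ≥ p log ρ - log M p`, hence `ω_M(ρ) ≥ a log ρ` for large `ρ` whenever `a < p`; as `p` is
arbitrary, `ω_M` outgrows every multiple of `log`.
-/

open Filter Asymptotics

/-- The associated function `ω_M(ρ) = sup_{p} log(ρ^p / M p)` of a sequence `M`. -/
noncomputable def assocFun (M : ℕ → ℝ) (ρ : ℝ) : ℝ :=
  ⨆ p : ℕ, Real.log (ρ ^ p / M p)

section

variable {M : ℕ → ℝ}

lemma eventually_pow_le_of_tendsto_rpow_inv (hpos : ∀ p, 0 < M p)
    (hlim : Tendsto (fun p : ℕ => (M p) ^ ((p : ℝ)⁻¹)) atTop atTop) {ρ : ℝ} (hρ : 0 ≤ ρ) :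
    ∀ᶠ p in atTop, ρ ^ p ≤ M p := by
  filter_upwards [hlim.eventually_ge_atTop ρ, eventually_ne_atTop 0] with p hp hp0
  calc ρ ^ p ≤ ((M p) ^ ((p : ℝ)⁻¹)) ^ p := pow_le_pow_left₀ hρ hp p
    _ = M p := Real.rpow_inv_natCast_pow (hpos p).le hp0

lemma bddAbove_range_log_pow_div (hpos : ∀ p, 0 < M p)
    (hlim : Tendsto (fun p : ℕ => (M p) ^ ((p : ℝ)⁻¹)) atTop atTop) {ρ : ℝ} (hρ : 0 ≤ ρ) :
    BddAbove (Set.range fun p : ℕ => Real.log (ρ ^ p / M p)) := by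
  refine (isBoundedUnder_of_eventually_le (a := 0) ?_).bddAbove_range
  filter_upwards [eventually_pow_le_of_tendsto_rpow_inv hpos hlim hρ] with p hp
  exact Real.log_nonpos (div_nonneg (pow_nonneg hρ p) (hpos p).le) ((div_le_one (hpos p)).mpr hp)

lemma natCast_mul_log_sub_log_le_assocFun (hpos : ∀ p, 0 < M p)
    (hlim : Tendsto (fun p : ℕ => (M p) ^ ((p : ℝ)⁻¹)) atTop atTop) {ρ : ℝ} (hρ : 0 < ρ)
    (p : ℕ) : p * Real.log ρ - Real.log (M p) ≤ assocFun M ρ := by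
  rw [← Real.log_pow, ← Real.log_div (pow_ne_zero p hρ.ne') (hpos p).ne']
  exact le_ciSup (bddAbove_range_log_pow_div hpos hlim hρ.le) p

lemma eventually_mul_log_le_assocFun (hpos : ∀ p, 0 < M p)
    (hlim : Tendsto (fun p : ℕ => (M p) ^ ((p : ℝ)⁻¹)) atTop atTop) (a : ℝ) :
    ∀ᶠ ρ in atTop, a * Real.log ρ ≤ assocFun M ρ := by
  obtain ⟨p, hap⟩ := exists_nat_gt a
  have hpa : 0 < (p : ℝ) - a := sub_pos.mpr hap
  filter_upwards [eventually_gt_atTop 0,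
    Real.tendsto_log_atTop.eventually_ge_atTop (Real.log (M p) / ((p : ℝ) - a))] with ρ hρ hlog
  have hMp : Real.log (M p) ≤ ((p : ℝ) - a) * Real.log ρ := by
    rwa [div_le_iff₀ hpa, mul_comm] at hlog
  linarith [natCast_mul_log_sub_log_le_assocFun hpos hlim hρ p]

end

theorem log_isLittleO_assocFun_general (M : ℕ → ℝ) (hpos : ∀ p, 0 < M p)
    (hlim : Tendsto (fun p : ℕ => (M p) ^ ((p : ℝ)⁻¹)) atTop atTop) :
    (fun ρ : ℝ => Real.log ρ) =o[atTop] (assocFun M) := by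
  refine isLittleO_iff.mpr fun c hc => ?_
  filter_upwards [eventually_ge_atTop 1, eventually_mul_log_le_assocFun hpos hlim c⁻¹]
    with ρ hρ hω
  have hlog : 0 ≤ Real.log ρ := Real.log_nonneg hρ
  have hω0 : 0 ≤ assocFun M ρ := (mul_nonneg (inv_nonneg.mpr hc.le) hlog).trans hω
  rw [Real.norm_of_nonneg hlog, Real.norm_of_nonneg hω0]
  calc Real.log ρ = c * (c⁻¹ * Real.log ρ) := by field_simp
    _ ≤ c * assocFun M ρ := mul_le_mul_of_nonneg_left hω hc.le

/-- If `M` is positive, log-convex (M.1), `M 0 = 1` and `(M p)^(1/p) → ∞`, then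
`log ρ = o(ω_M(ρ))` as `ρ → ∞`. -/
theorem log_isLittleO_assocFun (M : ℕ → ℝ) (hpos : ∀ p, 0 < M p) (h0 : M 0 = 1)
    (hM1 : ∀ p, 1 ≤ p → (M p) ^ 2 ≤ M (p - 1) * M (p + 1))
    (hlim : Tendsto (fun p : ℕ => (M p) ^ ((p : ℝ)⁻¹)) atTop atTop) :
    (fun ρ : ℝ => Real.log ρ) =o[atTop] (assocFun M) :=
  log_isLittleO_assocFun_general M hpos hlim
end

section
/- Let M : ℕ → ℝ be positive with M 0 = 1, satisfying (M.1) and (M.2): there exist C, H ≥ 1 with M (p+q) ≤ C H^(p+q) M p M q for all p, q. Then the associated function satisfies 2 ω_M(ρ) ≤ ω_M(H ρ) + log C for all ρ ≥ 0. -/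
/-- The associated function `ω_M(ρ) = sup_{p} log(ρ^p / M p)`, valued in the
extended reals so that the supremum is always meaningful. -/
noncomputable def assocFunE (M : ℕ → ℝ) (ρ : ℝ) : EReal :=
  ⨆ p : ℕ, (Real.log (ρ ^ p / M p) : EReal)

/-! Multiplying (M.2) by `ρ ^ (p + q) / (M p * M q * M (p + q))` gives
`(ρ ^ p / M p) * (ρ ^ q / M q) ≤ C * (H * ρ) ^ (p + q) / M (p + q)`; taking logarithms and then
suprema over `p` and `q` separately bounds `ω_M(ρ) + ω_M(ρ)`, which is `2 ω_M(ρ)` even in `EReal`. -/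

open Real

theorem EReal.two_mul (x : EReal) : 2 * x = x + x := by
  rw [show (2 : EReal) = 1 + 1 by norm_num, right_distrib_of_nonneg zero_le_one zero_le_one,
    one_mul]

theorem EReal.iSup_add_iSup_le {ι κ : Sort*} {f : ι → EReal} {g : κ → EReal} {a : EReal}
    (h : ∀ i j, f i + g j ≤ a) : (⨆ i, f i) + ⨆ j, g j ≤ a :=
  add_le_of_forall_lt fun x hx y hy => by
    obtain ⟨i, hi⟩ := lt_iSup_iff.1 hx
    obtain ⟨j, hj⟩ := lt_iSup_iff.1 hy
    exact (add_le_add hi.le hj.le).trans (h i j)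

theorem Real.log_add_log_le_of_mul_le {a b c d : ℝ} (ha : 0 < a) (hb : 0 < b)
    (h : a * b ≤ c * d) : log a + log b ≤ log c + log d := by
  have hcd : c * d ≠ 0 := ((mul_pos ha hb).trans_le h).ne'
  rw [← log_mul ha.ne' hb.ne', ← log_mul (left_ne_zero_of_mul hcd) (right_ne_zero_of_mul hcd)]
  exact log_le_log (mul_pos ha hb) h

section AssocFun

variable {M : ℕ → ℝ} {C H ρ : ℝ}

theorem log_pow_div_le_assocFunE (ρ : ℝ) (n : ℕ) :
    (log (ρ ^ n / M n) : EReal) ≤ assocFunE M ρ :=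
  le_iSup (fun n => (log (ρ ^ n / M n) : EReal)) n

-- Uses the junk value `log 0 = 0`.
theorem log_zero_pow_div (h0 : M 0 = 1) (n : ℕ) : log (0 ^ n / M n) = 0 := by
  cases n <;> simp [h0]

theorem pow_div_mul_pow_div_le (hpos : ∀ p, 0 < M p)
    (hM2 : ∀ p q : ℕ, M (p + q) ≤ C * H ^ (p + q) * M p * M q) (hρ : 0 ≤ ρ) (p q : ℕ) :
    ρ ^ p / M p * (ρ ^ q / M q) ≤ (H * ρ) ^ (p + q) / M (p + q) * C := by
  rw [div_mul_div_comm, ← pow_add, div_mul_eq_mul_div,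
    div_le_div_iff₀ (mul_pos (hpos p) (hpos q)) (hpos (p + q))]
  calc ρ ^ (p + q) * M (p + q) ≤ ρ ^ (p + q) * (C * H ^ (p + q) * M p * M q) := by
        gcongr; exact hM2 p q
    _ = (H * ρ) ^ (p + q) * C * (M p * M q) := by ring

theorem log_pow_div_add_log_pow_div_le (hpos : ∀ p, 0 < M p) (h0 : M 0 = 1) (hC : 1 ≤ C)
    (hM2 : ∀ p q : ℕ, M (p + q) ≤ C * H ^ (p + q) * M p * M q) (hρ : 0 ≤ ρ) (p q : ℕ) :
    log (ρ ^ p / M p) + log (ρ ^ q / M q) ≤ log ((H * ρ) ^ (p + q) / M (p + q)) + log C := by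
  rcases hρ.eq_or_lt with rfl | hρ
  · simpa [log_zero_pow_div h0] using log_nonneg hC
  · exact log_add_log_le_of_mul_le (div_pos (pow_pos hρ p) (hpos p))
      (div_pos (pow_pos hρ q) (hpos q)) (pow_div_mul_pow_div_le hpos hM2 hρ.le p q)

end AssocFun

theorem two_mul_assocFun_le_general (M : ℕ → ℝ) (hpos : ∀ p, 0 < M p) (h0 : M 0 = 1)
    (C H : ℝ) (hC : 1 ≤ C)
    (hM2 : ∀ p q : ℕ, M (p + q) ≤ C * H ^ (p + q) * M p * M q) :
    ∀ ρ : ℝ, 0 ≤ ρ →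
      2 * assocFunE M ρ ≤ assocFunE M (H * ρ) + (Real.log C : EReal) := by
  intro ρ hρ
  rw [EReal.two_mul]
  refine EReal.iSup_add_iSup_le fun p q => ?_
  calc (log (ρ ^ p / M p) : EReal) + log (ρ ^ q / M q)
      ≤ ((log ((H * ρ) ^ (p + q) / M (p + q)) + log C : ℝ) : EReal) := by
        exact_mod_cast log_pow_div_add_log_pow_div_le hpos h0 hC hM2 hρ p q
    _ ≤ assocFunE M (H * ρ) + (log C : EReal) := by
        rw [EReal.coe_add]
        gcongr
        exact log_pow_div_le_assocFunE (H * ρ) (p + q)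

/-- If `M` is positive with `M 0 = 1`, satisfies (M.1) and (M.2) with constants
`C, H ≥ 1`, then `2 ω_M(ρ) ≤ ω_M(H ρ) + log C` for all `ρ ≥ 0`. -/
theorem two_mul_assocFun_le (M : ℕ → ℝ) (hpos : ∀ p, 0 < M p) (h0 : M 0 = 1)
    (hM1 : ∀ p, 1 ≤ p → (M p) ^ 2 ≤ M (p - 1) * M (p + 1))
    (C H : ℝ) (hC : 1 ≤ C) (hH : 1 ≤ H)
    (hM2 : ∀ p q : ℕ, M (p + q) ≤ C * H ^ (p + q) * M p * M q) :
    ∀ ρ : ℝ, 0 ≤ ρ →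
      2 * assocFunE M ρ ≤ assocFunE M (H * ρ) + (Real.log C : EReal) :=
  two_mul_assocFun_le_general M hpos h0 C H hC hM2
end

section
/- Let a > 0 and let M : ℕ → ℝ be a positive sequence satisfying (M.4)_a, i.e., the sequence p ↦ m p^a / p (where m p = M p / M(p-1)) is almost non-decreasing: there is C > 0 with m p^a / p ≤ C · m q^a / q whenever 1 ≤ p ≤ q. Suppose moreover that m p^a / p is actually non-decreasing. Then either (p!)^(1/a) ≺ M (i.e., for every L > 0 there is C > 0 with (p!)^(1/a) ≤ C L^p M p for all p), or (p!)^(1/a) ≍ M (i.e., both (p!)^(1/a) ⊂ M and M ⊂ (p!)^(1/a)). -/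
/-!
Put `t_p = (m_p ^ a / p) ^ (1 / a) = m_p / p ^ (1 / a)`, a non-decreasing sequence. Then
`M_p / M_{p-1} = t_p · (p! / (p-1)!) ^ (1 / a)`, so comparing `M` with `(p!) ^ (1 / a)` reduces to
comparing consecutive quotients. If `t` is bounded by `B`, then `t_1 ≤ t_p ≤ B` yields both
inclusions, with geometric constants `1 / t_1` and `B`. Otherwise `t_p → ∞`, and for every `L > 0`
the quotients of `(p!) ^ (1 / a)` are eventually at most `L` times those of `M`.
-/

open Set

lemma exists_pos_forall_le_of_succ_le {u : ℕ → ℝ} {N : ℕ} (hu : ∀ k, N ≤ k → u (k + 1) ≤ u k) :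
    ∃ C, 0 < C ∧ ∀ p, u p ≤ C := by
  obtain ⟨C, hC⟩ : BddAbove (u '' Iic N) := ((finite_Iic N).image u).bddAbove
  refine ⟨max C 1, by positivity, fun p => ?_⟩
  rcases le_total p N with hp | hp
  · exact (hC (mem_image_of_mem u hp)).trans (le_max_left _ _)
  · have h : u p ≤ u N := by
      induction p, hp using Nat.le_induction with
      | base => exact le_rfl
      | succ k hk ih => exact (hu k hk).trans ih
    exact h.trans ((hC (mem_image_of_mem u (mem_Iic.mpr le_rfl))).trans (le_max_left _ _))

/-- The quotient `y p / (B ^ p * x p)` is eventually non-increasing, hence bounded. -/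
lemma exists_le_mul_pow_mul_of_ratio_le {x y : ℕ → ℝ} (hx : ∀ p, 0 < x p) (hy : ∀ p, 0 < y p)
    {B : ℝ} (hB : 0 < B) {N : ℕ} (h : ∀ k, N ≤ k → y (k + 1) / y k ≤ B * (x (k + 1) / x k)) :
    ∃ C, 0 < C ∧ ∀ p, y p ≤ C * B ^ p * x p := by
  obtain ⟨C, hC, hle⟩ :=
    exists_pos_forall_le_of_succ_le (u := fun p => y p / (B ^ p * x p)) (N := N) fun k hk => by
      have hk := h k hk
      have := hx k; have := hx (k + 1); have := hy k; have := hy (k + 1)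
      rw [div_le_iff₀ (hy k), mul_div_assoc', div_mul_eq_mul_div, le_div_iff₀ (hx k)] at hk
      rw [div_le_div_iff₀ (by positivity) (by positivity), pow_succ]
      nlinarith [pow_pos hB k]
  refine ⟨C, hC, fun p => ?_⟩
  have := hx p
  have := hle p
  rw [div_le_iff₀ (by positivity)] at this
  linarith

lemma factorial_succ_rpow_div (a : ℝ) (k : ℕ) :
    ((k + 1).factorial : ℝ) ^ (1 / a) / (k.factorial : ℝ) ^ (1 / a) =
      ((k + 1 : ℕ) : ℝ) ^ (1 / a) := by
  rw [Nat.factorial_succ, Nat.cast_mul, Real.mul_rpow (by positivity) (by positivity),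
    mul_div_cancel_right₀ _ (by positivity)]

/-- The paper's `(m^{a,*}_p) ^ (1 / a)`, i.e. `t_p` above. -/
noncomputable def normRatio (a : ℝ) (M : ℕ → ℝ) (p : ℕ) : ℝ :=
  ((M p / M (p - 1)) ^ a / p) ^ (1 / a)

section NormRatio

variable {a : ℝ} {M : ℕ → ℝ}

lemma normRatio_pos (hM : ∀ p, 0 < M p) {p : ℕ} (hp : 1 ≤ p) : 0 < normRatio a M p := by
  have := hM p
  have := hM (p - 1)
  have : (0 : ℝ) < p := by exact_mod_cast hp
  unfold normRatio
  positivity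

lemma normRatio_le_normRatio (ha : 0 < a) (hM : ∀ p, 0 < M p)
    (hmono : ∀ p q : ℕ, 1 ≤ p → p ≤ q →
      (M p / M (p - 1)) ^ a / (p : ℝ) ≤ (M q / M (q - 1)) ^ a / (q : ℝ))
    {p q : ℕ} (hp : 1 ≤ p) (hpq : p ≤ q) : normRatio a M p ≤ normRatio a M q := by
  have := hM p
  have := hM (p - 1)
  exact Real.rpow_le_rpow (by positivity) (hmono p q hp hpq) (by positivity)

lemma div_eq_normRatio_mul (ha : a ≠ 0) (hM : ∀ p, 0 < M p) (k : ℕ) :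
    M (k + 1) / M k = normRatio a M (k + 1) * ((k + 1 : ℕ) : ℝ) ^ (1 / a) := by
  have := hM k
  have := hM (k + 1)
  rw [normRatio, Nat.add_sub_cancel, Real.div_rpow (by positivity) (by positivity), one_div,
    Real.rpow_rpow_inv (by positivity) ha, div_mul_cancel₀ _ (by positivity)]

lemma factorial_rpow_ratio_le (ha : a ≠ 0) (hM : ∀ p, 0 < M p) {L : ℝ} {k : ℕ}
    (h : 1 ≤ L * normRatio a M (k + 1)) :
    ((k + 1).factorial : ℝ) ^ (1 / a) / (k.factorial : ℝ) ^ (1 / a) ≤ L * (M (k + 1) / M k) := by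
  rw [factorial_succ_rpow_div, div_eq_normRatio_mul ha hM, ← mul_assoc]
  exact le_mul_of_one_le_left (by positivity) h

lemma ratio_le_factorial_rpow_ratio (ha : a ≠ 0) (hM : ∀ p, 0 < M p) {B : ℝ} {k : ℕ}
    (h : normRatio a M (k + 1) ≤ B) :
    M (k + 1) / M k ≤ B * (((k + 1).factorial : ℝ) ^ (1 / a) / (k.factorial : ℝ) ^ (1 / a)) := by
  rw [factorial_succ_rpow_div, div_eq_normRatio_mul ha hM]
  exact mul_le_mul_of_nonneg_right h (by positivity)

end NormRatio

theorem gevrey_prec_or_equiv_general (a : ℝ) (ha : 0 < a) (M : ℕ → ℝ)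
    (hpos : ∀ p, 0 < M p)
    (hmono : ∀ p q : ℕ, 1 ≤ p → p ≤ q →
      (M p / M (p - 1)) ^ a / (p : ℝ) ≤ (M q / M (q - 1)) ^ a / (q : ℝ)) :
    (∀ L : ℝ, 0 < L → ∃ C : ℝ, 0 < C ∧
        ∀ p : ℕ, (p.factorial : ℝ) ^ (1 / a) ≤ C * L ^ p * M p) ∨
    ((∃ C L : ℝ, 0 < C ∧ 0 < L ∧
        ∀ p : ℕ, (p.factorial : ℝ) ^ (1 / a) ≤ C * L ^ p * M p) ∧
     (∃ C L : ℝ, 0 < C ∧ 0 < L ∧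
        ∀ p : ℕ, M p ≤ C * L ^ p * (p.factorial : ℝ) ^ (1 / a))) := by
  have hF : ∀ p : ℕ, 0 < (p.factorial : ℝ) ^ (1 / a) := fun p => by positivity
  have ht : ∀ {p q : ℕ}, 1 ≤ p → p ≤ q → normRatio a M p ≤ normRatio a M q :=
    normRatio_le_normRatio ha hpos hmono
  by_cases hbdd : ∃ B, ∀ k, normRatio a M (k + 1) ≤ B
  · obtain ⟨B, hB⟩ := hbdd
    have ht₁ : 0 < normRatio a M 1 := normRatio_pos hpos le_rfl
    have hB₀ : 0 < B := ht₁.trans_le (hB 0)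
    right
    constructor
    · obtain ⟨C, hC, h⟩ := exists_le_mul_pow_mul_of_ratio_le hpos hF (inv_pos.2 ht₁) (N := 0)
        fun k _ => factorial_rpow_ratio_le ha.ne' hpos <|
          (le_inv_mul_iff₀ ht₁).2 (by simpa using ht le_rfl (by omega : 1 ≤ k + 1))
      exact ⟨C, _, hC, inv_pos.2 ht₁, h⟩
    · obtain ⟨C, hC, h⟩ := exists_le_mul_pow_mul_of_ratio_le hF hpos hB₀ (N := 0)
        fun k _ => ratio_le_factorial_rpow_ratio ha.ne' hpos (hB k)
      exact ⟨C, B, hC, hB₀, h⟩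
  · push Not at hbdd
    left
    intro L hL
    obtain ⟨N, hN⟩ := hbdd L⁻¹
    exact exists_le_mul_pow_mul_of_ratio_le hpos hF hL (N := N) fun k hk =>
      factorial_rpow_ratio_le ha.ne' hpos <|
        (inv_le_iff_one_le_mul₀' hL).1 (hN.le.trans (ht (by omega) (by omega)))

/-- Let `a > 0` and let `M` be a positive sequence satisfying `(M.4)_a`
(the sequence `p ↦ m_p^a / p`, where `m_p = M p / M (p-1)`, is almost
non-decreasing), and suppose moreover that `p ↦ m_p^a / p` is actually
non-decreasing.  Then either `(p!)^(1/a) ≺ M` or `(p!)^(1/a) ≍ M`. -/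
theorem gevrey_prec_or_equiv (a : ℝ) (ha : 0 < a) (M : ℕ → ℝ)
    (hpos : ∀ p, 0 < M p)
    (halmost : ∃ C : ℝ, 0 < C ∧ ∀ p q : ℕ, 1 ≤ p → p ≤ q →
      (M p / M (p - 1)) ^ a / (p : ℝ) ≤ C * ((M q / M (q - 1)) ^ a / (q : ℝ)))
    (hmono : ∀ p q : ℕ, 1 ≤ p → p ≤ q →
      (M p / M (p - 1)) ^ a / (p : ℝ) ≤ (M q / M (q - 1)) ^ a / (q : ℝ)) :
    (∀ L : ℝ, 0 < L → ∃ C : ℝ, 0 < C ∧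
        ∀ p : ℕ, (p.factorial : ℝ) ^ (1 / a) ≤ C * L ^ p * M p) ∨
    ((∃ C L : ℝ, 0 < C ∧ 0 < L ∧
        ∀ p : ℕ, (p.factorial : ℝ) ^ (1 / a) ≤ C * L ^ p * M p) ∧
     (∃ C L : ℝ, 0 < C ∧ 0 < L ∧
        ∀ p : ℕ, M p ≤ C * L ^ p * (p.factorial : ℝ) ^ (1 / a))) :=
  gevrey_prec_or_equiv_general a ha M hpos hmono
end

section
/- Let a > 0 and let M be a weight sequence (M 0 = M 1 = 1, satisfying (M.1), (M.2), and ∑_p 1/(M p)^(1/p) < ∞). Then there exist C, L > 0 such that M(⌊a·p⌋) ≤ C L^p (M p)^a for all p ∈ ℕ. -/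
/-- Log-convex interpolation: for `1 ≤ m ≤ n`, `M m ≤ M n ^ (m/n)`. -/
lemma weightSeq_interp (M : ℕ → ℝ) (hpos : ∀ p, 0 < M p) (h0 : M 0 = 1)
    (hconv : ∀ q : ℕ, (M (q + 1)) ^ 2 ≤ M q * M (q + 2))
    {m n : ℕ} (hm : 1 ≤ m) (hmn : m ≤ n) :
    M m ≤ M n ^ ((m : ℝ) / (n : ℝ)) := by
  set c : ℕ → ℝ := fun p => Real.log (M p) with hc
  set d : ℕ → ℝ := fun p => c (p + 1) - c p with hd
  have hdmono : Monotone d := by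
    apply monotone_nat_of_le_succ
    intro q
    have hlog := Real.log_le_log (pow_pos (hpos (q + 1)) 2) (hconv q)
    rw [Real.log_pow, Real.log_mul (hpos q).ne' (hpos (q + 2)).ne'] at hlog
    simp only [hd, hc]
    push_cast at hlog
    linarith
  have hsum1 : ∑ i ∈ Finset.range m, d i = c m - c 0 := Finset.sum_range_sub c m
  have hsum2 : ∑ i ∈ Finset.Ico m n, d i = c n - c m := by
    rw [Finset.sum_Ico_eq_sub d hmn, Finset.sum_range_sub c, Finset.sum_range_sub c]
    ring
  have hub : ∑ i ∈ Finset.range m, d i ≤ m • d (m - 1) := by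
    have := Finset.sum_le_card_nsmul (Finset.range m) d (d (m - 1))
      (fun i hi => hdmono (by simp at hi; omega))
    rwa [Finset.card_range] at this
  have hlb : (n - m) • d (m - 1) ≤ ∑ i ∈ Finset.Ico m n, d i := by
    have := Finset.card_nsmul_le_sum (Finset.Ico m n) d (d (m - 1))
      (fun i hi => hdmono (by simp at hi; omega))
    rwa [Nat.card_Ico] at this
  have hc0 : c 0 = 0 := by simp [hc, h0]
  rw [hsum1, hc0, sub_zero, nsmul_eq_mul] at hub
  rw [hsum2, nsmul_eq_mul] at hlb
  have hcast : ((n - m : ℕ) : ℝ) = (n : ℝ) - (m : ℝ) := by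
    push_cast [Nat.cast_sub hmn]; ring
  rw [hcast] at hlb
  have hmR : (1 : ℝ) ≤ (m : ℝ) := by exact_mod_cast hm
  have hnR : (m : ℝ) ≤ (n : ℝ) := by exact_mod_cast hmn
  have key : (n : ℝ) * c m ≤ (m : ℝ) * c n := by
    nlinarith [mul_le_mul_of_nonneg_left hub (sub_nonneg.mpr hnR),
      mul_le_mul_of_nonneg_left hlb (by linarith : (0:ℝ) ≤ (m:ℝ))]
  have hnpos : (0 : ℝ) < (n : ℝ) := by
    have : 0 < n := by omega
    exact_mod_cast this
  have hle : c m ≤ ((m : ℝ) / (n : ℝ)) * c n := by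
    rw [div_mul_eq_mul_div, le_div_iff₀ hnpos]
    linarith
  apply (Real.log_le_log_iff (hpos m)
    (Real.rpow_pos_of_pos (hpos n) ((m : ℝ) / (n : ℝ)))).mp
  rw [Real.log_rpow (hpos n)]
  exact hle

/-- Iterated (M.2). -/
lemma weightSeq_iter (M : ℕ → ℝ) (hpos : ∀ p, 0 < M p) (h0 : M 0 = 1)
    {C H : ℝ} (hC : 1 ≤ C) (hH : 1 ≤ H)
    (hCH : ∀ p q : ℕ, M (p + q) ≤ C * H ^ (p + q) * M p * M q) :
    ∀ k p : ℕ, M (k * p) ≤ C ^ k * H ^ (k * k * p) * (M p) ^ k := by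
  have hC0 : (0:ℝ) < C := by linarith
  have hH0 : (0:ℝ) < H := by linarith
  intro k
  induction k with
  | zero => intro p; simp [h0]
  | succ k ih =>
    intro p
    have h1 : M ((k + 1) * p) ≤ C * H ^ (k * p + p) * M (k * p) * M p := by
      have := hCH (k * p) p
      rwa [Nat.succ_mul]
    have h2 : C * H ^ (k * p + p) * M (k * p) * M p
        ≤ C * H ^ (k * p + p) * (C ^ k * H ^ (k * k * p) * (M p) ^ k) * M p := by
      apply mul_le_mul_of_nonneg_right _ (hpos p).le
      exact mul_le_mul_of_nonneg_left (ih p) (by positivity)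
    have h3 : C * H ^ (k * p + p) * (C ^ k * H ^ (k * k * p) * (M p) ^ k) * M p
        = C ^ (k + 1) * H ^ ((k * p + p) + k * k * p) * (M p) ^ (k + 1) := by
      rw [pow_add, pow_succ, pow_succ]; ring
    have h4 : H ^ ((k * p + p) + k * k * p) ≤ H ^ ((k + 1) * (k + 1) * p) := by
      apply pow_le_pow_right₀ hH
      have : (k + 1) * (k + 1) * p = k * k * p + 2 * (k * p) + p := by ring
      rw [this]; omega
    calc M ((k + 1) * p)
        ≤ C * H ^ (k * p + p) * (C ^ k * H ^ (k * k * p) * (M p) ^ k) * M p := h1.trans h2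
      _ = C ^ (k + 1) * H ^ ((k * p + p) + k * k * p) * (M p) ^ (k + 1) := h3
      _ ≤ C ^ (k + 1) * H ^ ((k + 1) * (k + 1) * p) * (M p) ^ (k + 1) := by
          apply mul_le_mul_of_nonneg_right _ (pow_nonneg (hpos p).le _)
          exact mul_le_mul_of_nonneg_left h4 (pow_nonneg hC0.le _)

/-- Let `a > 0` and let `M` be a weight sequence (`M 0 = M 1 = 1`, positive,
satisfying (M.1), (M.2) and (M.3)').  Then there are `C, L > 0` with
`M ⌊a·p⌋ ≤ C L^p (M p)^a` for all `p`. -/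
theorem weightSeq_floor_bound (a : ℝ) (ha : 0 < a) (M : ℕ → ℝ)
    (hpos : ∀ p, 0 < M p) (h0 : M 0 = 1) (h1 : M 1 = 1)
    (hM1 : ∀ p, 1 ≤ p → (M p) ^ 2 ≤ M (p - 1) * M (p + 1))
    (hM2 : ∃ C H : ℝ, 1 ≤ C ∧ 1 ≤ H ∧
      ∀ p q : ℕ, M (p + q) ≤ C * H ^ (p + q) * M p * M q)
    (hM3 : Summable fun p : ℕ => 1 / (M (p + 1)) ^ (((p : ℝ) + 1)⁻¹)) :
    ∃ C L : ℝ, 0 < C ∧ 0 < L ∧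
      ∀ p : ℕ, M (⌊a * (p : ℝ)⌋₊) ≤ C * L ^ p * (M p) ^ a := by
  obtain ⟨C, H, hC, hH, hCH⟩ := hM2
  have hC0 : (0:ℝ) < C := by linarith
  have hH0 : (0:ℝ) < H := by linarith
  have hconv : ∀ q : ℕ, (M (q + 1)) ^ 2 ≤ M q * M (q + 2) := by
    intro q
    have := hM1 (q + 1) (by omega)
    simpa using this
  have hr1 : ∀ q : ℕ, M q ≤ M (q + 1) := by
    have hrat : ∀ q : ℕ, 1 ≤ M (q + 1) / M q := by
      intro q
      induction q with
      | zero => simp [h0, h1]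
      | succ q ih =>
        have step : M (q + 1) / M q ≤ M (q + 2) / M (q + 1) := by
          rw [div_le_div_iff₀ (hpos q) (hpos (q + 1))]
          nlinarith [hconv q]
        linarith
    intro q
    have := hrat q
    rw [le_div_iff₀ (hpos q)] at this
    linarith
  have hMmono : Monotone M := monotone_nat_of_le_succ hr1
  have hMone : ∀ p, 1 ≤ M p := by
    intro p
    calc (1 : ℝ) = M 0 := h0.symm
      _ ≤ M p := hMmono (Nat.zero_le p)
  set k : ℕ := ⌈a⌉₊ with hk
  have hk1 : 1 ≤ k := Nat.ceil_pos.mpr ha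
  have hak : a ≤ (k : ℝ) := Nat.le_ceil a
  have hkR : (1 : ℝ) ≤ (k : ℝ) := by exact_mod_cast hk1
  refine ⟨C ^ a, H ^ (a * k), Real.rpow_pos_of_pos hC0 a,
    Real.rpow_pos_of_pos hH0 _, ?_⟩
  have hCa : 1 ≤ C ^ a := Real.one_le_rpow hC ha.le
  have hLa : 1 ≤ H ^ (a * (k:ℝ)) := Real.one_le_rpow hH (by positivity)
  intro p
  set m : ℕ := ⌊a * (p : ℝ)⌋₊ with hm
  by_cases hm0 : m = 0
  · rw [hm0, h0]
    have h2 : (1:ℝ) ≤ (H ^ (a * (k:ℝ))) ^ p := one_le_pow₀ hLa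
    have h3 : (1:ℝ) ≤ (M p) ^ a := Real.one_le_rpow (hMone p) ha.le
    calc (1:ℝ) = 1 * 1 * 1 := by ring
      _ ≤ C ^ a * (H ^ (a * (k:ℝ))) ^ p * (M p) ^ a := by
          apply mul_le_mul (mul_le_mul hCa h2 zero_le_one (by linarith)) h3 zero_le_one
          nlinarith
  · have hp0 : p ≠ 0 := by
      rintro rfl
      simp [hm] at hm0
    have hpR : (0 : ℝ) < (p : ℝ) := by
      exact_mod_cast Nat.pos_of_ne_zero hp0
    have hmle : (m : ℝ) ≤ a * p := Nat.floor_le (by positivity)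
    have hmn : m ≤ k * p := by
      have h : (m : ℝ) ≤ ((k * p : ℕ) : ℝ) := by
        push_cast
        nlinarith [mul_le_mul_of_nonneg_right hak (Nat.cast_nonneg p)]
      exact_mod_cast h
    have step1 : M m ≤ M (k * p) ^ ((m : ℝ) / ((k * p : ℕ) : ℝ)) :=
      weightSeq_interp M hpos h0 hconv (Nat.one_le_iff_ne_zero.mpr hm0) hmn
    have hexp : (m : ℝ) / ((k * p : ℕ) : ℝ) ≤ a / (k : ℝ) := by
      rw [div_le_div_iff₀ (by push_cast; positivity) (by linarith)]
      push_cast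
      nlinarith
    have step2 : M (k * p) ^ ((m : ℝ) / ((k * p : ℕ) : ℝ)) ≤ M (k * p) ^ (a / (k:ℝ)) :=
      Real.rpow_le_rpow_of_exponent_le (hMone _) hexp
    have step3 : M (k * p) ^ (a / (k:ℝ))
        ≤ (C ^ k * H ^ (k * k * p) * (M p) ^ k) ^ (a / (k:ℝ)) :=
      Real.rpow_le_rpow (hpos _).le (weightSeq_iter M hpos h0 hC hH hCH k p)
        (div_nonneg ha.le (by linarith))
    have hkne : (k : ℝ) ≠ 0 := by linarith
    have e1 : (k : ℝ) * (a / (k:ℝ)) = a := by field_simp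
    have e2 : ((k * k * p : ℕ) : ℝ) * (a / (k:ℝ)) = a * (k:ℝ) * (p:ℝ) := by
      push_cast; field_simp
    have heq : (C ^ k * H ^ (k * k * p) * (M p) ^ k : ℝ) ^ (a / (k:ℝ))
        = C ^ a * (H ^ (a * (k:ℝ))) ^ p * (M p) ^ a := by
      rw [Real.mul_rpow (by positivity) (pow_nonneg (hpos p).le _),
        Real.mul_rpow (pow_nonneg hC0.le _) (pow_nonneg hH0.le _),
        ← Real.rpow_natCast C k, ← Real.rpow_mul hC0.le, e1,
        ← Real.rpow_natCast H (k * k * p), ← Real.rpow_mul hH0.le, e2,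
        ← Real.rpow_natCast (M p) k, ← Real.rpow_mul (hpos p).le, e1,
        ← Real.rpow_natCast (H ^ (a * (k:ℝ))) p, ← Real.rpow_mul hH0.le]
    calc M m ≤ M (k * p) ^ ((m : ℝ) / ((k * p : ℕ) : ℝ)) := step1
      _ ≤ M (k * p) ^ (a / (k:ℝ)) := step2
      _ ≤ (C ^ k * H ^ (k * k * p) * (M p) ^ k) ^ (a / (k:ℝ)) := step3
      _ = C ^ a * (H ^ (a * (k:ℝ))) ^ p * (M p) ^ a := heq
end

section
/- Let P(x,t) be a nonconstant hypoelliptic polynomial on ℝ^{d+1} and let d(x) = min { |Im ζ| : ζ ∈ ℂ, P(x,ζ) = 0 } for x ∈ ℝ^d. Let a > 0. If there exist C, R > 0 such that |x|^{a l} |∂_t^l P(x,t)| ≤ C |P(x,t)| for all l ∈ ℕ, |x| ≥ R, t ∈ ℝ, then there exist C', R' > 0 such that |x|^a ≤ C' d(x) for all |x| ≥ R'. -/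
/-- `P(x,ζ) = ∑_{k=0}^m Q_k(x) ζ^k`, a polynomial in `ζ` with coefficients
depending on `x ∈ ℝ^d`. -/
noncomputable def Ppoly (d m : ℕ) (Q : ℕ → EuclideanSpace ℝ (Fin d) → ℂ)
    (x : EuclideanSpace ℝ (Fin d)) (ζ : ℂ) : ℂ :=
  ∑ k ∈ Finset.range (m + 1), Q k x * ζ ^ k

/-- `d(x) = min { |Im ζ| : ζ ∈ ℂ, P(x,ζ) = 0 }`. -/
noncomputable def rootImDist (d m : ℕ) (Q : ℕ → EuclideanSpace ℝ (Fin d) → ℂ)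
    (x : EuclideanSpace ℝ (Fin d)) : ℝ :=
  sInf {y : ℝ | ∃ ζ : ℂ, Ppoly d m Q x ζ = 0 ∧ y = |ζ.im|}

open Polynomial in
lemma iteratedDeriv_polyEval (p : Polynomial ℂ) (l : ℕ) (s : ℝ) :
    iteratedDeriv l (fun u : ℝ => p.eval (u : ℂ)) s
      = (derivative^[l] p).eval (s : ℂ) := by
  induction l generalizing p with
  | zero => simp
  | succ l ih =>
      rw [iteratedDeriv_succ']
      have hd : deriv (fun u : ℝ => p.eval (u : ℂ))
          = fun u : ℝ => (derivative p).eval (u : ℂ) := by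
        funext u
        exact ((p.hasDerivAt ((u : ℝ) : ℂ)).comp_ofReal).deriv
      rw [hd, ih, Function.iterate_succ_apply]


/-- Lemma 2.2, (i) ⇒ (ii): let `P(x,t)` be monic of degree `m ≥ 1` in `t`,
nonvanishing for real `t` and `|x| ≥ R` (as for a hypoelliptic polynomial), and
suppose `|x|^{a l} |∂_t^l P(x,t)| ≤ C |P(x,t)|` for `|x| ≥ R`, `t ∈ ℝ`.  Then
`|x|^a ≤ C' d(x)` for `|x| ≥ R'`. -/
theorem rootImDist_lower_bound (d m : ℕ) (hm : 1 ≤ m)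
    (Q : ℕ → EuclideanSpace ℝ (Fin d) → ℂ) (hQm : ∀ x, Q m x = 1)
    (a : ℝ) (ha : 0 < a)
    (h : ∃ C R : ℝ, 0 < C ∧ 0 < R ∧
      (∀ (x : EuclideanSpace ℝ (Fin d)) (t : ℝ), R ≤ ‖x‖ →
        Ppoly d m Q x (t : ℂ) ≠ 0) ∧
      (∀ (l : ℕ) (x : EuclideanSpace ℝ (Fin d)) (t : ℝ), R ≤ ‖x‖ →
        ‖x‖ ^ (a * l) * ‖iteratedDeriv l (fun s : ℝ => Ppoly d m Q x (s : ℂ)) t‖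
          ≤ C * ‖Ppoly d m Q x (t : ℂ)‖)) :
    ∃ C' R' : ℝ, 0 < C' ∧ 0 < R' ∧
      ∀ x : EuclideanSpace ℝ (Fin d), R' ≤ ‖x‖ →
        ‖x‖ ^ a ≤ C' * rootImDist d m Q x := by
  classical
  obtain ⟨C, R, hC, hR, hnz, hbd⟩ := h
  set c : ℝ := Real.log (1 + 1 / C) with hc
  have h1C : (0:ℝ) < 1 / C := one_div_pos.2 hC
  have hc0 : 0 < c := Real.log_pos (by linarith)
  refine ⟨1 / c, R, by positivity, hR, fun x hx => ?_⟩
  set p : Polynomial ℂ := ∑ k ∈ Finset.range (m + 1), Polynomial.C (Q k x) * Polynomial.X ^ k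
    with hp
  have hpe : ∀ ζ : ℂ, p.eval ζ = Ppoly d m Q x ζ := by
    intro ζ; simp [hp, Ppoly, Polynomial.eval_finset_sum]
  have hNx : 0 < ‖x‖ := lt_of_lt_of_le hR hx
  set X : ℝ := ‖x‖ ^ a with hXdef
  have hX : 0 < X := Real.rpow_pos_of_pos hNx a
  have hcoeffm : p.coeff m = 1 := by
    simp [hp, Polynomial.finset_sum_coeff, Polynomial.coeff_C_mul, Polynomial.coeff_X_pow,
      Finset.sum_ite_eq', hQm]
  have hdeg : p.natDegree ≤ m := by
    apply Polynomial.natDegree_sum_le_of_forall_le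
    intro k hk
    refine (Polynomial.natDegree_C_mul_le _ _).trans ?_
    simpa using Nat.lt_succ_iff.mp (Finset.mem_range.mp hk)
  -- key estimate for any root
  have key : ∀ ζ : ℂ, Ppoly d m Q x ζ = 0 → c * X ≤ |ζ.im| := by
    intro ζ hζ
    set t : ℝ := ζ.re with ht
    set y : ℝ := ζ.im with hy
    set N : ℝ := ‖Ppoly d m Q x (t : ℂ)‖ with hNdef
    have hN0 : 0 < N := norm_pos_iff.2 (hnz x t hx)
    have hζt : ζ - (t : ℂ) = (y : ℂ) * Complex.I := by
      apply Complex.ext <;> simp [ht, hy]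
    -- Taylor expansion at t
    have htay : (0 : ℂ) = ∑ k ∈ Finset.range (m + 1),
        (Polynomial.hasseDeriv k p).eval (t : ℂ) * ((y : ℂ) * Complex.I) ^ k := by
      have h1 : (Polynomial.taylor (t : ℂ) p).eval (ζ - (t : ℂ)) = p.eval ζ :=
        Polynomial.taylor_eval_sub _ _ _
      have h2 : (Polynomial.taylor (t : ℂ) p).natDegree < m + 1 := by
        rw [Polynomial.natDegree_taylor]; omega
      rw [hpe, hζ] at h1
      rw [← h1, Polynomial.eval_eq_sum_range' h2, hζt]
      simp [Polynomial.taylor_coeff]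
    -- derivative bounds
    have hder : ∀ l : ℕ, X ^ l * ‖(Polynomial.derivative^[l] p).eval (t : ℂ)‖ ≤ C * N := by
      intro l
      have := hbd l x t hx
      have hrw : ∀ s : ℝ, Ppoly d m Q x (s : ℂ) = p.eval (s : ℂ) := fun s => (hpe _).symm
      simp only [hrw] at this
      rw [iteratedDeriv_polyEval] at this
      have hpow : ‖x‖ ^ (a * (l : ℝ)) = X ^ l := by
        rw [Real.rpow_mul (norm_nonneg x), Real.rpow_natCast]
      rw [hpow] at this
      rw [hNdef, ← hpe]
      exact this
    -- hasse deriv eval norms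
    have hhasse : ∀ l : ℕ, ‖(Polynomial.hasseDeriv l p).eval (t : ℂ)‖ * (l.factorial : ℝ)
        = ‖(Polynomial.derivative^[l] p).eval (t : ℂ)‖ := by
      intro l
      have h0 : (l.factorial • Polynomial.hasseDeriv l (R := ℂ)) p
          = Polynomial.derivative^[l] p := by
        rw [← Polynomial.factorial_smul_hasseDeriv]
      rw [← h0]
      simp [mul_comm, Nat.cast_smul_eq_nsmul]
    set u : ℝ := |y| / X with hu
    have hu0 : 0 ≤ u := div_nonneg (abs_nonneg y) hX.le
    -- main inequality : N ≤ C * N * (exp u - 1)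
    have hmain : N ≤ C * N * (Real.exp u - 1) := by
      have hsplit := Finset.sum_range_succ' (fun k =>
        (Polynomial.hasseDeriv k p).eval (t : ℂ) * ((y : ℂ) * Complex.I) ^ k) m
      rw [hsplit] at htay
      have h00 : (Polynomial.hasseDeriv 0 p).eval (t : ℂ) * ((y : ℂ) * Complex.I) ^ 0
          = Ppoly d m Q x (t : ℂ) := by
        simp [Polynomial.hasseDeriv_zero, hpe]
      rw [h00] at htay
      have hPt : Ppoly d m Q x (t : ℂ) = -∑ k ∈ Finset.range m,
          (Polynomial.hasseDeriv (k + 1) p).eval (t : ℂ) * ((y : ℂ) * Complex.I) ^ (k + 1) := by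
        linear_combination -htay
      have hNle : N ≤ ∑ k ∈ Finset.range m,
          ‖(Polynomial.hasseDeriv (k + 1) p).eval (t : ℂ)‖ * |y| ^ (k + 1) := by
        rw [hNdef, hPt, norm_neg]
        refine (norm_sum_le _ _).trans (le_of_eq ?_)
        refine Finset.sum_congr rfl fun k _ => ?_
        rw [norm_mul, norm_pow, norm_mul, Complex.norm_I, Complex.norm_real,
          Real.norm_eq_abs, mul_one]
      have hterm : ∀ k : ℕ, ‖(Polynomial.hasseDeriv (k + 1) p).eval (t : ℂ)‖ * |y| ^ (k + 1)
          ≤ C * N * (u ^ (k + 1) / ((k + 1).factorial : ℝ)) := by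
        intro k
        set l := k + 1
        have hfac : (0:ℝ) < (l.factorial : ℝ) := by positivity
        have hD := hder l
        have hH := hhasse l
        have hXl : (0:ℝ) < X ^ l := pow_pos hX l
        have huy : |y| ^ l = u ^ l * X ^ l := by
          rw [hu, div_pow, div_mul_cancel₀ _ hXl.ne']
        rw [huy]
        have hHle : ‖(Polynomial.hasseDeriv l p).eval (t : ℂ)‖
            = ‖(Polynomial.derivative^[l] p).eval (t : ℂ)‖ / (l.factorial : ℝ) := by
          rw [← hH, mul_div_cancel_right₀ _ hfac.ne']
        rw [hHle]
        have hDle : ‖(Polynomial.derivative^[l] p).eval (t : ℂ)‖ ≤ C * N / X ^ l := by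
          rw [le_div_iff₀ hXl]; linarith [hder l]
        calc ‖(Polynomial.derivative^[l] p).eval (t : ℂ)‖ / (l.factorial : ℝ) * (u ^ l * X ^ l)
            ≤ (C * N / X ^ l) / (l.factorial : ℝ) * (u ^ l * X ^ l) := by
              have : (0:ℝ) ≤ u ^ l * X ^ l := by positivity
              gcongr
          _ = C * N * (u ^ l / (l.factorial : ℝ)) := by
              field_simp
      have hsum : ∑ k ∈ Finset.range m, u ^ (k + 1) / ((k + 1).factorial : ℝ)
          ≤ Real.exp u - 1 := by
        have := Real.sum_le_exp_of_nonneg hu0 (m + 1)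
        have hsplit2 := Finset.sum_range_succ' (fun k => u ^ k / (k.factorial : ℝ)) m
        rw [hsplit2] at this
        simp only [pow_zero, Nat.factorial_zero, Nat.cast_one, div_one] at this
        linarith
      calc N ≤ ∑ k ∈ Finset.range m,
            ‖(Polynomial.hasseDeriv (k + 1) p).eval (t : ℂ)‖ * |y| ^ (k + 1) := hNle
        _ ≤ ∑ k ∈ Finset.range m, C * N * (u ^ (k + 1) / ((k + 1).factorial : ℝ)) :=
            Finset.sum_le_sum fun k _ => hterm k
        _ = C * N * ∑ k ∈ Finset.range m, u ^ (k + 1) / ((k + 1).factorial : ℝ) := by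
            rw [Finset.mul_sum]
        _ ≤ C * N * (Real.exp u - 1) := by
            have : (0:ℝ) ≤ C * N := by positivity
            exact mul_le_mul_of_nonneg_left hsum this
    -- conclude
    have hexp : 1 + 1 / C ≤ Real.exp u := by
      have h1 : 1 ≤ C * (Real.exp u - 1) := by nlinarith
      have h2 : 1 / C ≤ Real.exp u - 1 := by
        rw [div_le_iff₀ hC]
        nlinarith
      linarith
    have hcu : c ≤ u := by
      rw [hc, Real.log_le_iff_le_exp (by linarith)]
      exact hexp
    have : c * X ≤ u * X := by gcongr
    rw [hu, div_mul_cancel₀ _ hX.ne'] at this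
    exact this
  -- nonemptiness of root set
  have hle : (m : WithBot ℕ) ≤ p.degree :=
    Polynomial.le_degree_of_ne_zero (by rw [hcoeffm]; exact one_ne_zero)
  have hdegpos : 0 < p.degree :=
    lt_of_lt_of_le (by exact_mod_cast (show 0 < m by omega)) hle
  obtain ⟨z, hz⟩ := Complex.exists_root hdegpos
  have hzroot : Ppoly d m Q x z = 0 := by rw [← hpe]; exact hz
  set S : Set ℝ := {y : ℝ | ∃ ζ : ℂ, Ppoly d m Q x ζ = 0 ∧ y = |ζ.im|} with hS
  have hSne : S.Nonempty := ⟨|z.im|, z, hzroot, rfl⟩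
  have hsInf : c * X ≤ sInf S := by
    apply le_csInf hSne
    rintro b ⟨ζ, h1, h2⟩
    rw [h2]; exact key ζ h1
  have : rootImDist d m Q x = sInf S := rfl
  rw [this, one_div, inv_mul_eq_div, le_div_iff₀ hc0]
  linarith [hsInf, mul_comm c X]
end

section
/- Let P(x,t) be a polynomial on ℝ^{d+1} which is monic of degree m in t, and let d(x) = min { |Im ζ| : P(x,ζ) = 0 }. Let a > 0. If there exist C, R > 0 with |x|^a ≤ C d(x) for |x| ≥ R, and P(x,t) ≠ 0 for |x| ≥ R and t ∈ ℝ, then there exist C', R' > 0 such that for all 1 ≤ k ≤ m: |x|^{ak} |∂_t^k P(x,t)| ≤ C' |P(x,t)| for |x| ≥ R', t ∈ ℝ. -/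
/-!
Fix `x` with `‖x‖ ≥ R` and `t ∈ ℝ`, and write `δ = d(x)`. Every root `r` of `P(x, ·)` satisfies
`|t - r| ≥ |Im r| ≥ δ`, so on the circle `|z - t| = δ` each factor `z - r` of `P(x, z)` is at most
twice `t - r`, giving `|P(x, z)| ≤ 2^m |P(x, t)|`. Cauchy's estimate on that circle bounds
`|∂_t^k P(x, t)|` by `k! 2^m |P(x, t)| / δ^k`, and `δ^k ≥ (‖x‖^a / C)^k`.
-/

open Polynomial Metric

theorem iteratedDeriv_comp_ofReal {f : ℂ → ℂ} (hf : Differentiable ℂ f) (n : ℕ) :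
    iteratedDeriv n (fun s : ℝ => f s) = fun s : ℝ => iteratedDeriv n f s := by
  induction n generalizing f with
  | zero => simp only [iteratedDeriv_zero]
  | succ n ih =>
    have hderiv : deriv (fun s : ℝ => f s) = fun s : ℝ => deriv f s :=
      funext fun s => (hf s).hasDerivAt.comp_ofReal.deriv
    rw [iteratedDeriv_succ', iteratedDeriv_succ', hderiv, ih hf.deriv]

theorem Polynomial.Splits.norm_eval_le_two_pow_mul_norm_eval {K : Type*} [NormedField K]
    {p : K[X]} (hp : Splits p) {z w : K} (h : ∀ r ∈ p.roots, ‖z - w‖ ≤ ‖w - r‖) :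
    ‖p.eval z‖ ≤ 2 ^ p.natDegree * ‖p.eval w‖ := by
  have hfactor : ∀ r ∈ p.roots, ‖z - r‖ ≤ 2 * ‖w - r‖ := fun r hr =>
    calc ‖z - r‖ ≤ ‖z - w‖ + ‖w - r‖ := norm_sub_le_norm_sub_add_norm_sub z w r
      _ ≤ 2 * ‖w - r‖ := by linarith [h r hr]
  have hnorm : ∀ y : K, ‖(p.roots.map (y - ·)).prod‖ = (p.roots.map fun r => ‖y - r‖).prod :=
    fun y => (Multiset.prod_hom' _ (normHom : K →*₀ ℝ) _).symm
  rw [hp.eval_eq_prod_roots, hp.eval_eq_prod_roots, norm_mul, norm_mul, hnorm, hnorm,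
    mul_left_comm]
  gcongr
  calc (p.roots.map fun r => ‖z - r‖).prod
      ≤ (p.roots.map fun r => 2 * ‖w - r‖).prod :=
        Multiset.prod_map_le_prod_map₀ _ _ (fun r _ => norm_nonneg _) hfactor
    _ = 2 ^ p.roots.card * (p.roots.map fun r => ‖w - r‖).prod := by
        rw [Multiset.prod_map_mul, Multiset.map_const', Multiset.prod_replicate]
    _ ≤ 2 ^ p.natDegree * (p.roots.map fun r => ‖w - r‖).prod := by
        gcongr
        · exact Multiset.prod_map_nonneg fun r _ => norm_nonneg _
        · norm_num
        · exact p.card_roots'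

theorem exists_polynomial_eval_eq_Ppoly (d m : ℕ) (Q : ℕ → EuclideanSpace ℝ (Fin d) → ℂ)
    (x : EuclideanSpace ℝ (Fin d)) :
    ∃ p : ℂ[X], p.natDegree ≤ m ∧ ∀ ζ, p.eval ζ = Ppoly d m Q x ζ := by
  refine ⟨∑ k ∈ Finset.range (m + 1), C (Q k x) * X ^ k, ?_,
    fun ζ => by simp [Ppoly, eval_finsetSum]⟩
  refine natDegree_sum_le_of_forall_le _ _ fun k hk => (natDegree_C_mul_X_pow_le _ _).trans ?_
  exact Nat.lt_succ_iff.mp (Finset.mem_range.mp hk)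

theorem rootImDist_le_abs_im {d m : ℕ} {Q : ℕ → EuclideanSpace ℝ (Fin d) → ℂ}
    {x : EuclideanSpace ℝ (Fin d)} {ζ : ℂ} (hζ : Ppoly d m Q x ζ = 0) :
    rootImDist d m Q x ≤ |ζ.im| :=
  csInf_le ⟨0, fun _ ⟨_, _, hy⟩ => hy ▸ abs_nonneg _⟩ ⟨ζ, hζ, rfl⟩

theorem norm_iteratedDeriv_Ppoly_le {d m : ℕ} {Q : ℕ → EuclideanSpace ℝ (Fin d) → ℂ}
    {x : EuclideanSpace ℝ (Fin d)} (hδ : 0 < rootImDist d m Q x) (k : ℕ) (t : ℝ) :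
    ‖iteratedDeriv k (fun s : ℝ => Ppoly d m Q x s) t‖ ≤
      k.factorial * (2 ^ m * ‖Ppoly d m Q x t‖) / rootImDist d m Q x ^ k := by
  obtain ⟨p, hpdeg, hp⟩ := exists_polynomial_eval_eq_Ppoly d m Q x
  have hsphere : ∀ z ∈ sphere (t : ℂ) (rootImDist d m Q x),
      ‖p.eval z‖ ≤ 2 ^ m * ‖p.eval (t : ℂ)‖ := by
    intro z hz
    refine ((IsAlgClosed.splits p).norm_eval_le_two_pow_mul_norm_eval fun r hr => ?_).trans
      (by gcongr; norm_num)
    calc ‖z - t‖ = rootImDist d m Q x := mem_sphere_iff_norm.mp hz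
      _ ≤ |r.im| := rootImDist_le_abs_im (by rw [← hp]; exact (mem_roots'.mp hr).2)
      _ = |((t : ℂ) - r).im| := by simp
      _ ≤ ‖(t : ℂ) - r‖ := Complex.abs_im_le_norm _
  simp only [← hp]
  rw [congrFun (iteratedDeriv_comp_ofReal p.differentiable k) t]
  exact Complex.norm_iteratedDeriv_le_of_forall_mem_sphere_norm_le k hδ
    p.differentiable.diffContOnCl hsphere

theorem deriv_bound_of_rootImDist_general (d m : ℕ)
    (Q : ℕ → EuclideanSpace ℝ (Fin d) → ℂ)
    (a : ℝ)
    (h : ∃ C R : ℝ, 0 < C ∧ 0 < R ∧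
      (∀ (x : EuclideanSpace ℝ (Fin d)) (t : ℝ), R ≤ ‖x‖ →
        Ppoly d m Q x (t : ℂ) ≠ 0) ∧
      (∀ x : EuclideanSpace ℝ (Fin d), R ≤ ‖x‖ →
        ‖x‖ ^ a ≤ C * rootImDist d m Q x)) :
    ∃ C' R' : ℝ, 0 < C' ∧ 0 < R' ∧
      ∀ k : ℕ, 1 ≤ k → k ≤ m →
        ∀ (x : EuclideanSpace ℝ (Fin d)) (t : ℝ), R' ≤ ‖x‖ →
          ‖x‖ ^ (a * k) * ‖iteratedDeriv k (fun s : ℝ => Ppoly d m Q x (s : ℂ)) t‖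
            ≤ C' * ‖Ppoly d m Q x (t : ℂ)‖ := by
  obtain ⟨C, R, hC, hR, -, hdist⟩ := h
  refine ⟨max C 1 ^ m * m.factorial * 2 ^ m, R, by positivity, hR, ?_⟩
  intro k _ hkm x t hx
  set δ := rootImDist d m Q x
  have hCδ : ‖x‖ ^ a ≤ C * δ := hdist x hx
  have hδ : 0 < δ :=
    pos_of_mul_pos_right ((Real.rpow_pos_of_pos (hR.trans_le hx) a).trans_le hCδ) hC.le
  have hpow : ‖x‖ ^ (a * k) ≤ (C * δ) ^ k := by
    rw [Real.rpow_mul (norm_nonneg x), Real.rpow_natCast]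
    exact pow_le_pow_left₀ (by positivity) hCδ k
  have hconst : C ^ k * k.factorial ≤ max C 1 ^ m * m.factorial := by
    gcongr ?_ * ?_
    · exact (pow_le_pow_left₀ hC.le (le_max_left C 1) k).trans
        (pow_le_pow_right₀ (le_max_right C 1) hkm)
    · exact_mod_cast Nat.factorial_le hkm
  calc ‖x‖ ^ (a * k) * ‖iteratedDeriv k (fun s : ℝ => Ppoly d m Q x s) t‖
      ≤ (C * δ) ^ k * (k.factorial * (2 ^ m * ‖Ppoly d m Q x t‖) / δ ^ k) := by
        gcongr
        exact norm_iteratedDeriv_Ppoly_le hδ k t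
    _ = C ^ k * k.factorial * 2 ^ m * ‖Ppoly d m Q x t‖ := by field_simp; ring
    _ ≤ max C 1 ^ m * m.factorial * 2 ^ m * ‖Ppoly d m Q x t‖ := by gcongr

/-- Lemma 2.2, (ii) ⇒ (i): let `P(x,t)` be monic of degree `m` in `t` with
`P(x,t) ≠ 0` for `|x| ≥ R`, `t ∈ ℝ`, and `|x|^a ≤ C d(x)` for `|x| ≥ R`.  Then
there are `C', R' > 0` with `|x|^{a k} |∂_t^k P(x,t)| ≤ C' |P(x,t)|` for all
`1 ≤ k ≤ m`, `|x| ≥ R'` and `t ∈ ℝ`. -/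
theorem deriv_bound_of_rootImDist (d m : ℕ) (hm : 1 ≤ m)
    (Q : ℕ → EuclideanSpace ℝ (Fin d) → ℂ) (hQm : ∀ x, Q m x = 1)
    (a : ℝ) (ha : 0 < a)
    (h : ∃ C R : ℝ, 0 < C ∧ 0 < R ∧
      (∀ (x : EuclideanSpace ℝ (Fin d)) (t : ℝ), R ≤ ‖x‖ →
        Ppoly d m Q x (t : ℂ) ≠ 0) ∧
      (∀ x : EuclideanSpace ℝ (Fin d), R ≤ ‖x‖ →
        ‖x‖ ^ a ≤ C * rootImDist d m Q x)) :
    ∃ C' R' : ℝ, 0 < C' ∧ 0 < R' ∧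
      ∀ k : ℕ, 1 ≤ k → k ≤ m →
        ∀ (x : EuclideanSpace ℝ (Fin d)) (t : ℝ), R' ≤ ‖x‖ →
          ‖x‖ ^ (a * k) * ‖iteratedDeriv k (fun s : ℝ => Ppoly d m Q x (s : ℂ)) t‖
            ≤ C' * ‖Ppoly d m Q x (t : ℂ)‖ :=
  deriv_bound_of_rootImDist_general d m Q a h
end

section
/- Let P(x,ζ) = ∑_{k=0}^m Q_k(x) ζ^k be monic in ζ, R > 0, and A = 2 max{1, S + 1/2} with S = max_{|x| ≤ R} ∑_{k=0}^{m−1} |Q_k(x)|. Then there exist C₂, L₂ > 0 such that for all l, p ∈ ℕ, all x with |x| ≤ R and all t ∈ ℝ: |∂_t^p ( (t + iA)^l / P(−x, −t − iA) )| ≤ C₂ L₂^{p+l} p! / (1 + |t|)^{p − l}. -/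
open Metric Finset

/-- Cauchy estimate for iterated derivatives. -/
lemma cauchy_deriv_bound {f : ℂ → ℂ} {c : ℂ} {r M : ℝ} (hr : 0 < r)
    (hf : DifferentiableOn ℂ f (closedBall c r))
    (hb : ∀ z ∈ closedBall c r, ‖f z‖ ≤ M) (p : ℕ) :
    ‖iteratedDeriv p f c‖ ≤ p.factorial * M / r ^ p := by
  have hM : 0 ≤ M := le_trans (norm_nonneg _) (hb c (mem_closedBall_self hr.le))
  lift r to NNReal using hr.le with R hRr
  have hR : 0 < R := by exact_mod_cast hr
  have h := hf.hasFPowerSeriesOnBall hR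
  have h1 : iteratedDeriv p f c = iteratedFDeriv ℂ p f c (fun _ => 1) :=
    iteratedDeriv_eq_iteratedFDeriv
  have h2 := h.factorial_smul (1 : ℂ) p
  have h3 : ‖iteratedDeriv p f c‖
      = (p.factorial : ℝ) * ‖(cauchyPowerSeries f c R p) (fun _ => (1 : ℂ))‖ := by
    rw [h1, ← h2, nsmul_eq_mul]
    simp [norm_mul]
  have h4 : ‖(cauchyPowerSeries f c R p) (fun _ => (1 : ℂ))‖
      ≤ ‖cauchyPowerSeries f c R p‖ := by
    have := (cauchyPowerSeries f c R p).le_opNorm (fun _ => (1 : ℂ))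
    simpa using this
  have hint : (∫ θ : ℝ in (0)..2 * Real.pi, ‖f (circleMap c R θ)‖)
      ≤ ∫ _θ : ℝ in (0)..2 * Real.pi, M := by
    apply intervalIntegral.integral_mono_on Real.two_pi_pos.le
    · apply ContinuousOn.intervalIntegrable
      exact ((hf.continuousOn.comp (continuous_circleMap c R).continuousOn
        (fun θ _ => circleMap_mem_closedBall c (by exact_mod_cast hr.le) θ)).norm)
    · exact intervalIntegrable_const
    · intro θ _
      exact hb _ (circleMap_mem_closedBall c (by exact_mod_cast hr.le) θ)
  have h5 := norm_cauchyPowerSeries_le f c R p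
  have h6 : ((2 * Real.pi)⁻¹ * ∫ θ : ℝ in (0)..2 * Real.pi, ‖f (circleMap c R θ)‖)
      * |(R : ℝ)|⁻¹ ^ p ≤ M / (R : ℝ) ^ p := by
    rw [intervalIntegral.integral_const, smul_eq_mul, sub_zero] at hint
    have hRabs : |(R : ℝ)| = (R : ℝ) := abs_of_nonneg R.coe_nonneg
    rw [hRabs, div_eq_mul_inv, ← inv_pow]
    apply mul_le_mul_of_nonneg_right _ (by positivity)
    calc (2 * Real.pi)⁻¹ * ∫ θ : ℝ in (0)..2 * Real.pi, ‖f (circleMap c R θ)‖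
        ≤ (2 * Real.pi)⁻¹ * (2 * Real.pi * M) := by gcongr
      _ = M := by field_simp
  calc ‖iteratedDeriv p f c‖
      = (p.factorial : ℝ) * ‖(cauchyPowerSeries f c R p) (fun _ => (1 : ℂ))‖ := h3
    _ ≤ (p.factorial : ℝ) * (M / (R : ℝ) ^ p) := by
        gcongr
        exact h4.trans (h5.trans h6)
    _ = p.factorial * M / (R : ℝ) ^ p := by ring

lemma iteratedDeriv_comp_ofReal' {f : ℂ → ℂ} {U : Set ℂ} (hU : IsOpen U)
    (hf : DifferentiableOn ℂ f U) (hre : ∀ s : ℝ, (s : ℂ) ∈ U) (p : ℕ) :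
    ∀ t : ℝ, iteratedDeriv p (fun s : ℝ => f s) t = iteratedDeriv p f t := by
  have han : AnalyticOnNhd ℂ f U := hf.analyticOnNhd hU
  induction p with
  | zero => simp
  | succ p ih =>
    intro t
    have hit : AnalyticOnNhd ℂ (deriv^[p] f) U := han.iterated_deriv p
    rw [iteratedDeriv_succ, iteratedDeriv_succ]
    have heq : (iteratedDeriv p fun s : ℝ => f s)
        = fun s : ℝ => iteratedDeriv p f s := funext ih
    rw [heq]
    have hdiff : DifferentiableAt ℂ (iteratedDeriv p f) t := by
      rw [iteratedDeriv_eq_iterate]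
      exact (hit _ (hre t)).differentiableAt
    exact (hdiff.hasDerivAt.comp_ofReal).deriv

/-- Lemma 3.2(ii): with `A = 2 max{1, S + 1/2}` where `S` bounds
`∑_{k=0}^{m−1} |Q_k(x)|` on `|x| ≤ R`, there are `C₂, L₂ > 0` such that for all
`l, p ∈ ℕ`, `|x| ≤ R` and `t ∈ ℝ`:
`|∂_t^p ((t+iA)^l / P(−x,−t−iA))| ≤ C₂ L₂^{p+l} p! / (1+|t|)^{p−l}`. -/
theorem deriv_reciprocal_shifted_bound (d m : ℕ) (hm : 1 ≤ m)
    (Q : ℕ → EuclideanSpace ℝ (Fin d) → ℂ) (hQm : ∀ x, Q m x = 1)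
    (R S : ℝ) (hR : 0 < R)
    (hS : ∀ x : EuclideanSpace ℝ (Fin d), ‖x‖ ≤ R →
      ∑ k ∈ Finset.range m, ‖Q k x‖ ≤ S) :
    ∃ C₂ L₂ : ℝ, 0 < C₂ ∧ 0 < L₂ ∧
      ∀ (l p : ℕ) (x : EuclideanSpace ℝ (Fin d)) (t : ℝ), ‖x‖ ≤ R →
        ‖iteratedDeriv p
            (fun s : ℝ =>
              ((s : ℂ) + Complex.I * ((2 * max 1 (S + 1 / 2) : ℝ) : ℂ)) ^ l /
                (∑ k ∈ Finset.range (m + 1),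
                  Q k (-x) *
                    (-(s : ℂ) - Complex.I * ((2 * max 1 (S + 1 / 2) : ℝ) : ℂ)) ^ k))
            t‖
          ≤ C₂ * L₂ ^ (p + l) * (p.factorial : ℝ) /
              (1 + |t|) ^ ((p : ℤ) - (l : ℤ)) := by
  have hS0 : 0 ≤ S := by
    have h0 := hS 0 (by simpa using hR.le)
    exact le_trans (Finset.sum_nonneg fun k _ => norm_nonneg _) h0
  set B : ℝ := max 1 (S + 1 / 2) with hBdef
  have hB1 : (1 : ℝ) ≤ B := le_max_left _ _
  have hBS : S + 1 / 2 ≤ B := le_max_right _ _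
  set A : ℝ := 2 * B with hAdef
  have hA2 : 2 ≤ A := by simp only [hAdef]; linarith
  have hA0 : 0 < A := by linarith
  set c : ℂ := Complex.I * (A : ℂ) with hcdef
  set L : ℝ := max 4 (3 * A / 2) with hLdef
  have hL4 : (4 : ℝ) ≤ L := le_max_left _ _
  have hL3A : 3 * A / 2 ≤ L := le_max_right _ _
  have hL0 : 0 < L := lt_of_lt_of_le (by norm_num) hL4
  refine ⟨2, L, by norm_num, hL0, ?_⟩
  intro l p x t hx
  have hx' : ∑ k ∈ Finset.range m, ‖Q k (-x)‖ ≤ S := hS (-x) (by simpa using hx)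
  -- lower bound on the denominator polynomial
  have hPlow : ∀ w : ℂ, B ≤ ‖w‖ →
      1 / 2 ≤ ‖∑ k ∈ Finset.range (m + 1), Q k (-x) * w ^ k‖ := by
    intro w hw
    have hw1 : 1 ≤ ‖w‖ := le_trans hB1 hw
    have hwS : S + 1 / 2 ≤ ‖w‖ := le_trans hBS hw
    have hT : ‖∑ k ∈ Finset.range m, Q k (-x) * w ^ k‖ ≤ S * ‖w‖ ^ (m - 1) := by
      calc ‖∑ k ∈ Finset.range m, Q k (-x) * w ^ k‖
          ≤ ∑ k ∈ Finset.range m, ‖Q k (-x) * w ^ k‖ := norm_sum_le _ _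
        _ = ∑ k ∈ Finset.range m, ‖Q k (-x)‖ * ‖w‖ ^ k := by
            simp [norm_mul, norm_pow]
        _ ≤ ∑ k ∈ Finset.range m, ‖Q k (-x)‖ * ‖w‖ ^ (m - 1) := by
            refine Finset.sum_le_sum fun k hk => ?_
            refine mul_le_mul_of_nonneg_left ?_ (norm_nonneg _)
            exact pow_le_pow_right₀ hw1 (by have := Finset.mem_range.mp hk; omega)
        _ = (∑ k ∈ Finset.range m, ‖Q k (-x)‖) * ‖w‖ ^ (m - 1) := by
            rw [← Finset.sum_mul]
        _ ≤ S * ‖w‖ ^ (m - 1) := by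
            exact mul_le_mul_of_nonneg_right hx' (by positivity)
    have hsum : (∑ k ∈ Finset.range (m + 1), Q k (-x) * w ^ k)
        = w ^ m + ∑ k ∈ Finset.range m, Q k (-x) * w ^ k := by
      rw [Finset.sum_range_succ, hQm, one_mul, add_comm]
    have hwm : ‖w ^ m‖ = ‖w‖ ^ (m - 1) * ‖w‖ := by
      rw [norm_pow, ← pow_succ]
      congr 1
      omega
    have hpow1 : 1 ≤ ‖w‖ ^ (m - 1) := one_le_pow₀ hw1
    have hlb : ‖w‖ ^ (m - 1) * ‖w‖ - S * ‖w‖ ^ (m - 1)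
        ≤ ‖∑ k ∈ Finset.range (m + 1), Q k (-x) * w ^ k‖ := by
      rw [hsum]
      have h := norm_sub_norm_le (w ^ m)
        (-(∑ k ∈ Finset.range m, Q k (-x) * w ^ k))
      rw [sub_neg_eq_add, norm_neg, hwm] at h
      linarith
    nlinarith [hpow1, hwS, hT, hlb]
  -- the complex function and its domain
  set den : ℂ → ℂ := fun ζ => ∑ k ∈ Finset.range (m + 1), Q k (-x) * (-ζ - c) ^ k
    with hdendef
  set g : ℂ → ℂ := fun ζ => (ζ + c) ^ l / den ζ with hgdef
  have hdenlow : ∀ ζ : ℂ, B ≤ ‖ζ + c‖ → 1 / 2 ≤ ‖den ζ‖ := by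
    intro ζ h
    have hne : ‖-ζ - c‖ = ‖ζ + c‖ := by
      rw [show -ζ - c = -(ζ + c) by ring, norm_neg]
    exact hPlow _ (by rw [hne]; exact h)
  have hdendiff : Differentiable ℂ den := by
    apply Differentiable.fun_sum
    intro k _
    exact (differentiable_const _).mul (((differentiable_id.neg).sub_const c).pow k)
  have hnumdiff : Differentiable ℂ (fun ζ : ℂ => (ζ + c) ^ l) :=
    (differentiable_id.add_const c).pow l
  set U : Set ℂ := {ζ : ℂ | den ζ ≠ 0} with hUdef
  have hUopen : IsOpen U := isOpen_ne.preimage hdendiff.continuous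
  have hgU : DifferentiableOn ℂ g U :=
    (hnumdiff.differentiableOn).div (hdendiff.differentiableOn) (fun z hz => hz)
  have hAnorm : ∀ s : ℝ, A ≤ ‖(s : ℂ) + c‖ := by
    intro s
    have him : ((s : ℂ) + c).im = A := by simp [hcdef]
    calc A = |((s : ℂ) + c).im| := by rw [him, abs_of_pos hA0]
      _ ≤ ‖(s : ℂ) + c‖ := Complex.abs_im_le_norm _
  have hBA : B ≤ A := by linarith
  have hreU : ∀ s : ℝ, ((s : ℂ)) ∈ U := by
    intro s
    intro h0
    have := hdenlow (s : ℂ) (le_trans hBA (hAnorm s))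
    rw [h0] at this
    simp at this
    linarith
  -- reduce real iterated derivative to complex one
  have hcomp := iteratedDeriv_comp_ofReal' hUopen hgU hreU p t
  have hfun : (fun s : ℝ =>
      ((s : ℂ) + Complex.I * ((A : ℝ) : ℂ)) ^ l /
        (∑ k ∈ Finset.range (m + 1),
          Q k (-x) * (-(s : ℂ) - Complex.I * ((A : ℝ) : ℂ)) ^ k))
      = fun s : ℝ => g (s : ℂ) := rfl
  rw [hfun, hcomp]
  -- Cauchy estimate on the disk of radius r around t
  set r : ℝ := ‖(t : ℂ) + c‖ / 2 with hrdef
  have h2r : ‖(t : ℂ) + c‖ = 2 * r := by rw [hrdef]; ring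
  have hrB : B ≤ r := by
    have := hAnorm t
    rw [h2r] at this
    linarith
  have hr0 : 0 < r := by linarith
  have hball : ∀ ζ ∈ closedBall ((t : ℂ)) r, r ≤ ‖ζ + c‖ ∧ ‖ζ + c‖ ≤ 3 * r := by
    intro ζ hζ
    have h1 : ‖ζ - (t : ℂ)‖ ≤ r := mem_closedBall_iff_norm.mp hζ
    have h2 : ‖(t : ℂ) + c‖ ≤ ‖ζ + c‖ + ‖ζ - (t : ℂ)‖ := by
      calc ‖(t : ℂ) + c‖ = ‖(ζ + c) - (ζ - (t : ℂ))‖ := by ring_nf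
        _ ≤ ‖ζ + c‖ + ‖ζ - (t : ℂ)‖ := norm_sub_le _ _
    have h3 : ‖ζ + c‖ ≤ ‖(t : ℂ) + c‖ + ‖ζ - (t : ℂ)‖ := by
      calc ‖ζ + c‖ = ‖((t : ℂ) + c) + (ζ - (t : ℂ))‖ := by ring_nf
        _ ≤ ‖(t : ℂ) + c‖ + ‖ζ - (t : ℂ)‖ := norm_add_le _ _
    rw [h2r] at h2 h3
    constructor <;> linarith
  have hdiffball : DifferentiableOn ℂ g (closedBall ((t : ℂ)) r) := by
    refine hgU.mono fun ζ hζ => ?_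
    intro h0
    have := hdenlow ζ (le_trans hrB (hball ζ hζ).1)
    rw [h0] at this
    simp at this
    linarith
  have hbound : ∀ ζ ∈ closedBall ((t : ℂ)) r, ‖g ζ‖ ≤ 2 * (3 * r) ^ l := by
    intro ζ hζ
    have hlo := hdenlow ζ (le_trans hrB (hball ζ hζ).1)
    have hup := (hball ζ hζ).2
    have : ‖g ζ‖ = ‖ζ + c‖ ^ l / ‖den ζ‖ := by
      rw [hgdef]; simp [norm_div, norm_pow]
    rw [this]
    calc ‖ζ + c‖ ^ l / ‖den ζ‖ ≤ (3 * r) ^ l / (1 / 2) := by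
          apply div_le_div₀ (by positivity) (pow_le_pow_left₀ (norm_nonneg _) hup l)
            (by norm_num) hlo
      _ = 2 * (3 * r) ^ l := by ring
  have key := cauchy_deriv_bound hr0 hdiffball hbound p
  refine key.trans ?_
  -- final arithmetic
  set u : ℝ := 1 + |t| with hudef
  have hu0 : 0 < u := by positivity
  have hzpow : u ^ ((p : ℤ) - (l : ℤ)) = u ^ p / u ^ l := by
    rw [zpow_sub₀ hu0.ne', zpow_natCast, zpow_natCast]
  rw [hzpow, div_div_eq_mul_div]
  have habs : |t| ≤ ‖(t : ℂ) + c‖ := by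
    have hre : ((t : ℂ) + c).re = t := by simp [hcdef]
    calc |t| = |((t : ℂ) + c).re| := by rw [hre]
      _ ≤ ‖(t : ℂ) + c‖ := Complex.abs_re_le_norm _
  have hur : u ≤ 4 * r := by
    have := hAnorm t
    rw [h2r] at habs this
    simp only [hudef]
    linarith
  have hru : r ≤ A / 2 * u := by
    have h3 : ‖(t : ℂ) + c‖ ≤ |t| + A := by
      calc ‖(t : ℂ) + c‖ ≤ ‖(t : ℂ)‖ + ‖c‖ := norm_add_le _ _
        _ = |t| + A := by
            simp [hcdef, Complex.norm_real, Real.norm_eq_abs, abs_of_pos hA0]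
    rw [h2r] at h3
    have hA1 : 1 ≤ A := by linarith
    nlinarith [abs_nonneg t]
  rw [div_le_div_iff₀ (by positivity) (by positivity)]
  calc (p.factorial : ℝ) * (2 * (3 * r) ^ l) * u ^ p
      ≤ (p.factorial : ℝ) * (2 * (3 * (A / 2 * u)) ^ l) * (4 * r) ^ p := by
        gcongr <;> linarith
    _ = 2 * (4 ^ p * (3 * A / 2) ^ l) * (p.factorial : ℝ) * u ^ l * r ^ p := by
        rw [show 3 * (A / 2 * u) = 3 * A / 2 * u by ring, mul_pow, mul_pow]
        ring
    _ ≤ 2 * (L ^ p * L ^ l) * (p.factorial : ℝ) * u ^ l * r ^ p := by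
        gcongr <;> first
          | exact pow_le_pow_left₀ (by norm_num) hL4 p
          | exact pow_le_pow_left₀ (by positivity) hL3A l
    _ = 2 * L ^ (p + l) * (p.factorial : ℝ) * u ^ l * r ^ p := by rw [pow_add]
end

section
/- With the operators 𝒞_l defined recursively as above (𝒞_l = 0 for l < m−1, 𝒞_{m−1} = id, 𝒞_l = −∑_{k=0}^{m−1} Q_k(D_x) 𝒞_{k+l−m} for l ≥ m), one has the explicit formula for every l ∈ ℕ and φ ∈ C^∞(ℝ^d): 𝒞_{m−1+l}(φ) = ∑_{β ∈ ℕ^m, σ(β)=l} (−1)^{|β|} (|β| choose β₁,…,β_m) ∏_{k=1}^m Q_{m−k}(D_x)^{β_k} φ, where σ(β) = ∑_{j=1}^m j β_j. -/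
/-!
The recurrence says precisely that the generating function of `c l = C (m - 1 + l)` satisfies
`(∑ c l Xˡ) * (1 + u) = 1` with `u = ∑_{j=1}^m Q_{m-j} Xʲ`. Since `u` has no constant term,
`c l` is the coefficient of `Xˡ` in the truncated geometric series `∑_{n ≤ l} (-u)ⁿ`, and the
multinomial theorem expands `uⁿ` into a sum over `β` with `|β| = n`, of which the terms with
`σ(β) = l` contribute to `Xˡ`.
-/

open Finset PowerSeries

namespace PowerSeries

variable {R : Type*}

theorem coeff_eq_sum_coeff_neg_pow_of_mul_one_add_eq_one [CommRing R] {G p : R⟦X⟧}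
    (hp : constantCoeff p = 0) (hG : G * (1 + p) = 1) (l : ℕ) :
    coeff l G = ∑ n ∈ range (l + 1), (-1) ^ n * coeff l (p ^ n) := by
  have hgeom : (∑ n ∈ range (l + 1), (-p) ^ n) * (1 + p) = 1 - (-p) ^ (l + 1) := by
    simpa using geom_sum_mul_neg (-p) (l + 1)
  have hsplit : G = ∑ n ∈ range (l + 1), (-p) ^ n + G * (-p) ^ (l + 1) := by
    linear_combination (∑ n ∈ range (l + 1), (-p) ^ n) * hG - G * hgeom
  have htail : coeff l (G * (-p) ^ (l + 1)) = 0 :=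
    X_pow_dvd_iff.1 (dvd_mul_of_dvd_right
      (pow_dvd_pow_of_dvd (X_dvd_iff.2 (by simp [hp])) _) G) l l.lt_succ_self
  rw [hsplit, map_add, htail, add_zero, map_sum]
  refine sum_congr rfl fun n _ => ?_
  rw [neg_pow, show (-1 : R⟦X⟧) = C (-1) by simp, ← map_pow, coeff_C_mul]

theorem coeff_sum_C_mul_X_pow_pow [CommSemiring R] {ι : Type*} [DecidableEq ι] (s : Finset ι)
    (a : ι → R) (w : ι → ℕ) (n l : ℕ) :
    coeff l ((∑ i ∈ s, C (a i) * X ^ w i) ^ n) =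
      ∑ k ∈ piAntidiag s n with ∑ i ∈ s, w i * k i = l,
        (Nat.multinomial s k : R) * ∏ i ∈ s, a i ^ k i := by
  rw [sum_pow_eq_sum_piAntidiag, map_sum, sum_filter]
  refine sum_congr rfl fun k _ => ?_
  have hprod : ∏ i ∈ s, (C (a i) * X ^ w i) ^ k i =
      C (∏ i ∈ s, a i ^ k i) * X ^ (∑ i ∈ s, w i * k i) := by
    simp only [mul_pow, prod_mul_distrib, ← pow_mul, prod_pow_eq_pow_sum, map_prod, map_pow]
  rw [hprod, ← map_natCast (C (R := R)), ← mul_assoc, ← map_mul, coeff_C_mul_X_pow]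
  simp only [eq_comm]

end PowerSeries

theorem mk_mul_one_add_sum_eq_one {A : Type*} [CommRing A] {m : ℕ} {Q c : ℕ → A}
    (hm : 1 ≤ m) (hc0 : ∀ l, l < m - 1 → c l = 0) (hc1 : c (m - 1) = 1)
    (hrec : ∀ l, c (m + l) = -∑ k ∈ range m, Q k * c (k + l)) :
    mk (fun l => c (m - 1 + l)) *
      (1 + ∑ j : Fin m, C (Q (m - (j + 1))) * X ^ (j + 1 : ℕ)) = 1 := by
  have hterm : ∀ (f : ℕ → A) (a : A) (k n : ℕ),
      coeff n (mk f * (C a * X ^ k)) = a * if k ≤ n then f (n - k) else 0 := by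
    intro f a k n
    rw [mul_left_comm, coeff_C_mul, mul_comm (mk f), coeff_X_pow_mul', coeff_mk]
  ext n
  simp only [mul_add, mul_one, mul_sum, map_add, map_sum, coeff_one, hterm, coeff_mk]
  rcases n with _ | l
  · simp [hc1]
  have hshift : ∀ j : Fin m,
      (if (j : ℕ) + 1 ≤ l + 1 then c (m - 1 + (l + 1 - (j + 1))) else 0) =
        c (m - 1 - j + l) := by
    intro j
    split_ifs with hj
    · congr 1; omega
    · rw [hc0 _ (by omega)]
  have hreflect : ∑ j : Fin m, Q (m - (j + 1)) * c (m - 1 - j + l) =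
      ∑ k ∈ range m, Q k * c (k + l) := by
    rw [Fin.sum_univ_eq_sum_range (fun j => Q (m - (j + 1)) * c (m - 1 - j + l)),
      ← sum_range_reflect]
    refine sum_congr rfl fun j hj => ?_
    have := mem_range.1 hj
    congr 2 <;> omega
  rw [sum_congr rfl fun j _ => by rw [hshift j], hreflect, if_neg l.succ_ne_zero,
    show m - 1 + (l + 1) = m + l by omega, hrec, neg_add_cancel]

theorem sum_le_sum_succ_mul {m : ℕ} (k : Fin m → ℕ) :
    ∑ j, k j ≤ ∑ j : Fin m, ((j : ℕ) + 1) * k j :=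
  sum_le_sum fun j _ => Nat.le_mul_of_pos_left _ j.succ_pos

theorem sum_range_sum_piAntidiag_filter {M : Type*} [AddCommMonoid M] (m l : ℕ)
    (f : (Fin m → ℕ) → M) :
    ∑ n ∈ range (l + 1),
        ∑ k ∈ piAntidiag univ n with ∑ j : Fin m, ((j : ℕ) + 1) * k j = l, f k =
      ∑ β : Fin m → Fin (l + 1) with ∑ j : Fin m, ((j : ℕ) + 1) * (β j : ℕ) = l,
        f (fun j => β j) := by
  symm
  rw [← sum_fiberwise_of_maps_to (g := fun β : Fin m → Fin (l + 1) => ∑ j, (β j : ℕ))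
    (t := range (l + 1))]
  · refine sum_congr rfl fun n _ => ?_
    refine sum_nbij (fun β j => (β j : ℕ)) ?_ ?_ ?_ fun _ _ => rfl
    · intro β hβ
      simp only [mem_filter, mem_univ, true_and] at hβ ⊢
      simp [hβ]
    · intro β _ γ _ h
      funext j
      exact Fin.ext (congrFun h j)
    · intro k hk
      simp only [coe_filter, mem_piAntidiag, Set.mem_ofPred_eq, mem_univ, implies_true,
        and_true] at hk
      have hle : ∀ j, k j ≤ l := fun j =>
        (single_le_sum (fun _ _ => Nat.zero_le _) (mem_univ j)).trans
          ((sum_le_sum_succ_mul k).trans hk.2.le)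
      refine ⟨fun j => ⟨k j, Nat.lt_succ_of_le (hle j)⟩, ?_, rfl⟩
      simp [hk.1, hk.2]
  · intro β hβ
    simp only [mem_filter, mem_univ, true_and] at hβ
    exact mem_range.2 (Nat.lt_succ_of_le ((sum_le_sum_succ_mul _).trans hβ.le))

theorem explicit_formula_C_general (A : Type*) [CommRing A] (m : ℕ) (hm : 1 ≤ m)
    (Q : ℕ → A)
    (C : ℕ → A)
    (hC0 : ∀ l, l < m - 1 → C l = 0)
    (hC1 : C (m - 1) = 1)
    (hCrec : ∀ l : ℕ, C (m + l) = -∑ k ∈ Finset.range m, Q k * C (k + l)) :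
    ∀ l : ℕ,
      C (m - 1 + l) =
        ∑ β ∈ Finset.univ.filter
            (fun β : Fin m → Fin (l + 1) => ∑ j : Fin m, ((j : ℕ) + 1) * (β j : ℕ) = l),
          (-1 : A) ^ (∑ j : Fin m, (β j : ℕ)) *
            (Nat.multinomial Finset.univ (fun j : Fin m => (β j : ℕ)) : A) *
            ∏ j : Fin m, Q (m - ((j : ℕ) + 1)) ^ (β j : ℕ) := by
  intro l
  have hu : constantCoeff
      (∑ j : Fin m, PowerSeries.C (Q (m - (j + 1))) * X ^ (j + 1 : ℕ)) = 0 := by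
    simp
  have hcoeff := coeff_eq_sum_coeff_neg_pow_of_mul_one_add_eq_one hu
    (mk_mul_one_add_sum_eq_one hm hC0 hC1 hCrec) l
  rw [coeff_mk] at hcoeff
  rw [hcoeff, ← sum_range_sum_piAntidiag_filter m l fun k =>
    (-1 : A) ^ (∑ j, k j) * (Nat.multinomial univ k : A) * ∏ j : Fin m, Q (m - (j + 1)) ^ k j]
  refine sum_congr rfl fun n _ => ?_
  rw [coeff_sum_C_mul_X_pow_pow, mul_sum]
  refine sum_congr rfl fun k hk => ?_
  rw [← (mem_piAntidiag.1 (mem_filter.1 hk).1).1, mul_assoc]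

/-- Explicit formula for the recursively defined operators `𝒞_l` (Proposition
4.5 of Kalmes): `𝒞_l = 0` for `l < m−1`, `𝒞_{m−1} = 1`,
`𝒞_l = −∑_{k=0}^{m−1} Q_k 𝒞_{k+l−m}` for `l ≥ m`; then
`𝒞_{m−1+l} = ∑_{σ(β)=l} (−1)^{|β|} (|β| choose β) ∏_{k=1}^m Q_{m−k}^{β_k}`,
where `σ(β) = ∑_{j=1}^m j β_j`.  The commuting constant-coefficient operators
`Q_0,…,Q_m` (with `Q_m = 1`) are modelled as elements of a commutative ring. -/
theorem explicit_formula_C (A : Type*) [CommRing A] (m : ℕ) (hm : 1 ≤ m)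
    (Q : ℕ → A) (hQm : Q m = 1)
    (C : ℕ → A)
    (hC0 : ∀ l, l < m - 1 → C l = 0)
    (hC1 : C (m - 1) = 1)
    (hCrec : ∀ l : ℕ, C (m + l) = -∑ k ∈ Finset.range m, Q k * C (k + l)) :
    ∀ l : ℕ,
      C (m - 1 + l) =
        ∑ β ∈ Finset.univ.filter
            (fun β : Fin m → Fin (l + 1) => ∑ j : Fin m, ((j : ℕ) + 1) * (β j : ℕ) = l),
          (-1 : A) ^ (∑ j : Fin m, (β j : ℕ)) *
            (Nat.multinomial Finset.univ (fun j : Fin m => (β j : ℕ)) : A) *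
            ∏ j : Fin m, Q (m - ((j : ℕ) + 1)) ^ (β j : ℕ) :=
  explicit_formula_C_general A m hm Q C hC0 hC1 hCrec
end
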